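/- Let f: ℕ → ℝ with Σ|f(i)| < ∞, and define F0(n) = Σ_{i≥n} f(i). Suppose f(n) < 0 for all n ≥ U (where U ≥ 1), f(n) > 0 for 0 ≤ n ≤ U−2, and f(U−1) ≥ 0. Let L = inf{n ≥ 0 : F0(n) ≤ 0}. Then L ≤ U, F0(n) > 0 for 0 ≤ n ≤ L−1, F0(L) ≤ 0, and F0(n) < 0 for all n ≥ L+1. -/
import Mathlib


theorem stmt_11 (f : ℕ → ℝ) (hf : Summable fun i => |f i|)
    (F0 : ℕ → ℝ) (hF0 : ∀ n, F0 n = ∑' i : ℕ, f (n + i))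
    (U : ℕ) (hU : 1 ≤ U)
    (hneg : ∀ n, U ≤ n → f n < 0)
    (hpos : ∀ n, n ≤ U - 2 → 0 < f n)
    (hU1 : 0 ≤ f (U - 1))
    (L : ℕ) (hL : L = sInf {n : ℕ | F0 n ≤ 0}) :
    L ≤ U ∧ (∀ n, n ≤ L - 1 → n < L → 0 < F0 n) ∧ F0 L ≤ 0 ∧
      (∀ n, L + 1 ≤ n → F0 n < 0) := by
  have hs : Summable f := hf.of_abs
  have hsum : ∀ n : ℕ, Summable fun i => f (n + i) := by
    intro n
    have := (summable_nat_add_iff n).2 hs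
    simpa [add_comm] using this
  have key : ∀ n, F0 n = f n + F0 (n + 1) := by
    intro n
    rw [hF0, hF0, Summable.tsum_eq_zero_add (hsum n), add_zero]
    congr 1
    exact tsum_congr fun i => by rw [show n + (i + 1) = n + 1 + i from by omega]
  have hnegF0 : ∀ n, U ≤ n → F0 n < 0 := by
    intro n hn
    rw [key n]
    have h1 : F0 (n + 1) ≤ 0 := by
      rw [hF0]
      exact tsum_nonpos fun i => (hneg _ (by omega)).le
    have h2 : f n < 0 := hneg n hn
    linarith
  have hne : {n : ℕ | F0 n ≤ 0}.Nonempty := ⟨U, (hnegF0 U le_rfl).le⟩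
  subst hL
  have hLU : sInf {n : ℕ | F0 n ≤ 0} ≤ U := Nat.sInf_le (hnegF0 U le_rfl).le
  have hLmem : F0 (sInf {n : ℕ | F0 n ≤ 0}) ≤ 0 := Nat.sInf_mem hne
  set L := sInf {n : ℕ | F0 n ≤ 0} with hLdef
  have fge : ∀ m, m ≤ U - 1 → 0 ≤ f m := by
    intro m hm
    rcases lt_or_eq_of_le hm with h | h
    · exact (hpos m (by omega)).le
    · rw [h]; exact hU1
  have aux : ∀ k, L + k ≤ U → F0 (L + k) ≤ 0 := by
    intro k
    induction k with
    | zero => intro _; simpa using hLmem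
    | succ k ih =>
      intro hk
      have h1 : F0 (L + k) ≤ 0 := ih (by omega)
      have h2 : 0 ≤ f (L + k) := fge _ (by omega)
      have := key (L + k)
      have : F0 (L + k + 1) = F0 (L + k) - f (L + k) := by linarith
      rw [show L + (k + 1) = L + k + 1 from by omega, this]
      linarith
  refine ⟨hLU, fun n _ hn => ?_, hLmem, fun n hn => ?_⟩
  · by_contra h
    push_neg at h
    exact absurd (Nat.sInf_le (show n ∈ {n : ℕ | F0 n ≤ 0} from h)) (by omega)
  · rcases le_or_gt U n with h | h
    · exact hnegF0 n h
    · have hm : F0 (n - 1) ≤ 0 := by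
        have := aux (n - 1 - L) (by omega)
        rwa [show L + (n - 1 - L) = n - 1 from by omega] at this
      have hfm : 0 < f (n - 1) := hpos _ (by omega)
      have hk := key (n - 1)
      rw [show n - 1 + 1 = n from by omega] at hk
      linarith
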